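/- (Membership in conv(X) via the disjunctive system.) A point (v, z, s) ∈ ℝ × ℝ^ℓ × ℝ belongs to the convex hull of X if and only if there exist α ∈ ℝ^{ℓ+1}_+ with Σ_{j=0}^ℓ α_j = 1 and reals v^0, ..., v^ℓ, s^0, ..., s^ℓ such that v = Σ_{j=0}^ℓ α_j v^j, s = Σ_{j=0}^ℓ α_j s^j, z = Σ_{j=1}^ℓ α_j 1_j, v^0 ≤ b_1, b_j ≤ v^j ≤ b_{j+1} for j ∈ [ℓ−1], v^ℓ ≥ b_ℓ, and ℒ(v^j) ≤ s^j for j = 0, ..., ℓ; moreover the weights are determined by z via α_0 = 1 − z_1, α_j = z_j − z_{j+1} for j ∈ [ℓ−1], and α_ℓ = z_ℓ. -/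

import Mathlib

/-!
For strictly increasing breakpoints the `z`-part of a point of `X` is forced to be a step vector
`𝟙_j` (`z_j = 1` forces `v ≥ b_j` and `z_j = 0` forces `v ≤ b_j`), so `X` is the union of the
`ℓ + 1` sets `Xʲ = {(v, 𝟙_j, s) : v ∈ [b_j, b_{j+1}], ℒ v ≤ s}`, which are nonempty and convex
because `ℒ` is. The convex hull of a finite union of nonempty convex sets consists exactly of the
combinations `∑ αⱼ xʲ` with `xʲ ∈ Xʲ`, and reading off the coordinates gives the disjunctive
system. The weights are determined by `z` because `z_k = ∑_{j > k} αⱼ` is a tail sum of them.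
-/

/-- The single-observation set `X`. -/
def Xset (ℓ : ℕ) (b : Fin ℓ → ℝ) (L : ℝ → ℝ) : Set (ℝ × (Fin ℓ → ℝ) × ℝ) :=
  {x | (∀ j, x.2.1 j = 0 ∨ x.2.1 j = 1) ∧ L x.1 ≤ x.2.2 ∧
    ∀ j, 0 ≤ (x.1 - b j) * x.2.1 j ∧ 0 ≤ (b j - x.1) * (1 - x.2.1 j)}

open Finset in
theorem convexHull_iUnion_eq {ι E : Type*} [Fintype ι] [AddCommGroup E] [Module ℝ E]
    {C : ι → Set E} (hC : ∀ i, Convex ℝ (C i)) (hne : ∀ i, (C i).Nonempty) :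
    convexHull ℝ (⋃ i, C i) = {x | ∃ (α : ι → ℝ) (y : ι → E),
      (∀ i, 0 ≤ α i) ∧ ∑ i, α i = 1 ∧ (∀ i, y i ∈ C i) ∧ ∑ i, α i • y i = x} := by
  classical
  refine Set.Subset.antisymm (convexHull_min ?_ ?_) ?_
  · intro x hx
    obtain ⟨i, hi⟩ := Set.mem_iUnion.1 hx
    refine ⟨Pi.single i 1, Function.update (fun j => (hne j).some) i x, fun j => ?_, by simp,
      fun j => ?_, by simp⟩
    · by_cases h : j = i <;> simp [h]
    · by_cases h : j = i
      · subst h; simpa using hi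
      · simpa [h] using (hne j).some_mem
  · rintro _ ⟨α, y, hα0, hα1, hy, rfl⟩ _ ⟨β, y', hβ0, hβ1, hy', rfl⟩ a b ha hb hab
    choose w hw hw_eq using fun i => (hC i).exists_mem_add_smul_eq (hy i) (hy' i)
      (mul_nonneg ha (hα0 i)) (mul_nonneg hb (hβ0 i))
    refine ⟨fun i => a * α i + b * β i, w, fun i => ?_, ?_, hw, ?_⟩
    · have := hα0 i; have := hβ0 i; positivity
    · simp [sum_add_distrib, ← mul_sum, hα1, hβ1, hab]
    · simp_rw [hw_eq, sum_add_distrib, smul_sum, mul_smul]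
  · rintro _ ⟨α, y, hα0, hα1, hy, rfl⟩
    exact mem_convexHull_of_exists_fintype α y hα0 hα1
      (fun i => Set.mem_iUnion_of_mem i (hy i)) rfl

theorem mk_eq_sum_smul_iff {ι : Type*} [Fintype ι] {ℓ : ℕ} (α : ι → ℝ)
    (y : ι → ℝ × (Fin ℓ → ℝ) × ℝ) (v : ℝ) (z : Fin ℓ → ℝ) (s : ℝ) :
    (v, z, s) = ∑ i, α i • y i ↔
      v = ∑ i, α i * (y i).1 ∧ (∀ k, z k = ∑ i, α i * (y i).2.1 k) ∧
        s = ∑ i, α i * (y i).2.2 := by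
  simp only [Prod.ext_iff, Prod.fst_sum, Prod.snd_sum, Prod.smul_fst, Prod.smul_snd,
    funext_iff, Finset.sum_apply, Pi.smul_apply, smul_eq_mul]

theorem sum_mul_ite_le_sub_sum_mul_ite_lt {n : ℕ} (α : Fin (n + 1) → ℝ) (j : Fin (n + 1)) :
    ∑ i, α i * (if (j : ℕ) ≤ i then 1 else 0) - ∑ i, α i * (if (j : ℕ) < i then 1 else 0) =
      α j := by
  rw [← Finset.sum_sub_distrib]
  calc ∑ i, (α i * (if (j : ℕ) ≤ i then 1 else 0) - α i * (if (j : ℕ) < i then 1 else 0))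
      = ∑ i, if i = j then α i else 0 := by
        refine Finset.sum_congr rfl fun i _ => ?_
        by_cases hij : i = j
        · simp [hij]
        · have : ((j : ℕ) ≤ i ↔ (j : ℕ) < i) := by
            have := Fin.val_ne_of_ne hij; omega
          simp [hij, this]
    _ = α j := by simp

/-- The paper's `𝟙_j`. -/
def stepVec (ℓ : ℕ) (j : Fin (ℓ + 1)) : Fin ℓ → ℝ := fun k => if (k : ℕ) < j then 1 else 0

/-- The paper's interval `[b_j, b_{j+1}]` (here `b` is indexed from `0`), without the lower end
for `j = 0` and the upper end for `j = ℓ`. -/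
def piece {ℓ : ℕ} (b : Fin ℓ → ℝ) (j : Fin (ℓ + 1)) : Set ℝ :=
  {x | (∀ h : 0 < (j : ℕ), b ⟨j - 1, Nat.sub_one_lt_of_le h j.is_le⟩ ≤ x) ∧
    ∀ h : (j : ℕ) < ℓ, x ≤ b ⟨j, h⟩}

def XsetPiece {ℓ : ℕ} (b : Fin ℓ → ℝ) (L : ℝ → ℝ) (j : Fin (ℓ + 1)) :
    Set (ℝ × (Fin ℓ → ℝ) × ℝ) :=
  {x | x.1 ∈ piece b j ∧ x.2.1 = stepVec ℓ j ∧ L x.1 ≤ x.2.2}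

section Pieces

variable {ℓ : ℕ} {b : Fin ℓ → ℝ} {L : ℝ → ℝ}

theorem piece_nonempty (hb : Monotone b) (j : Fin (ℓ + 1)) : (piece b j).Nonempty := by
  by_cases hj : (j : ℕ) < ℓ
  · exact ⟨b ⟨j, hj⟩, fun _ => hb (Fin.mk_le_mk.2 (by omega)), fun _ => le_rfl⟩
  · obtain ⟨M, hM⟩ := (Set.finite_range b).bddAbove
    exact ⟨M, fun _ => hM (Set.mem_range_self _), fun h => absurd h hj⟩

theorem convex_piece (j : Fin (ℓ + 1)) : Convex ℝ (piece b j) :=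
  fun _ hx _ hy _ _ ha hc hac =>
    ⟨fun h => convex_Ici (b ⟨j - 1, Nat.sub_one_lt_of_le h j.is_le⟩) (hx.1 h) (hy.1 h)
        ha hc hac,
      fun h => convex_Iic (b ⟨j, h⟩) (hx.2 h) (hy.2 h) ha hc hac⟩

theorem mem_piece_iff (hb : Monotone b) {j : Fin (ℓ + 1)} {x : ℝ} :
    x ∈ piece b j ↔
      (∀ k : Fin ℓ, (k : ℕ) < j → b k ≤ x) ∧ ∀ k : Fin ℓ, (j : ℕ) ≤ k → x ≤ b k := by
  constructor
  · rintro ⟨hlo, hhi⟩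
    exact ⟨fun k hk => (hb (Fin.le_def.2 (by simp only; omega))).trans (hlo (by omega)),
      fun k hk => (hhi (by omega)).trans (hb (Fin.le_def.2 hk))⟩
  · rintro ⟨hlo, hhi⟩
    exact ⟨fun h => hlo ⟨j - 1, Nat.sub_one_lt_of_le h j.is_le⟩ (by simp only; omega),
      fun h => hhi ⟨j, h⟩ le_rfl⟩

theorem XsetPiece_nonempty (hb : Monotone b) (j : Fin (ℓ + 1)) :
    (XsetPiece b L j).Nonempty :=
  let ⟨x, hx⟩ := piece_nonempty hb j
  ⟨(x, stepVec ℓ j, L x), hx, rfl, le_rfl⟩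

theorem convex_XsetPiece (hL : ConvexOn ℝ Set.univ L) (j : Fin (ℓ + 1)) :
    Convex ℝ (XsetPiece b L j) := by
  rintro ⟨v, z, s⟩ ⟨hv, rfl, hs⟩ ⟨v', z', s'⟩ ⟨hv', rfl, hs'⟩ a c ha hc hac
  refine ⟨convex_piece j hv hv' ha hc hac, by simp [← add_smul, hac], ?_⟩
  calc L (a • v + c • v') ≤ a • L v + c • L v' := hL.2 trivial trivial ha hc hac
    _ ≤ a • s + c • s' := by simp only [smul_eq_mul]; gcongr

theorem mk_stepVec_mem_Xset_iff (hb : Monotone b) {j : Fin (ℓ + 1)} {v s : ℝ} :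
    (v, stepVec ℓ j, s) ∈ Xset ℓ b L ↔ v ∈ piece b j ∧ L v ≤ s := by
  have hk : ∀ k : Fin ℓ,
      (0 ≤ (v - b k) * stepVec ℓ j k ∧ 0 ≤ (b k - v) * (1 - stepVec ℓ j k)) ↔
        ((k : ℕ) < j → b k ≤ v) ∧ ((j : ℕ) ≤ k → v ≤ b k) := by
    intro k
    by_cases h : (k : ℕ) < j
    · simp [stepVec, h]
    · simp [stepVec, h, le_of_not_gt h]
  have h01 : ∀ k, stepVec ℓ j k = 0 ∨ stepVec ℓ j k = 1 := fun k => by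
    unfold stepVec; split_ifs <;> simp
  simp only [Xset, Set.mem_ofPred_eq, hk]
  simp only [h01, implies_true, true_and, forall_and, mem_piece_iff hb, and_comm]

theorem antitone_of_mem_Xset (hb : StrictMono b) {x : ℝ × (Fin ℓ → ℝ) × ℝ}
    (hx : x ∈ Xset ℓ b L) : Antitone x.2.1 := by
  obtain ⟨h01, -, hcons⟩ := hx
  intro k k' hkk'
  rcases h01 k' with h' | h'
  · rcases h01 k with h | h <;> simp [h, h']
  · rcases h01 k with h | h
    · have hlo := (hcons k').1
      have hhi := (hcons k).2
      rw [h', mul_one] at hlo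
      rw [h, sub_zero, mul_one] at hhi
      have : k' ≤ k := hb.le_iff_le.1 (by linarith)
      rw [le_antisymm hkk' this] at h
      linarith
    · rw [h, h']

theorem exists_eq_stepVec_of_antitone {z : Fin ℓ → ℝ} (h01 : ∀ k, z k = 0 ∨ z k = 1)
    (hz : Antitone z) : ∃ j, z = stepVec ℓ j := by
  by_cases h : ∃ k, z k = 0
  · obtain ⟨k₀, hk₀, hmin⟩ := wellFounded_lt.has_min {k | z k = 0} h
    refine ⟨k₀.castSucc, funext fun k => ?_⟩
    by_cases hk : k < k₀
    · simp only [stepVec, Fin.val_castSucc, Fin.val_fin_lt.2 hk, if_true]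
      exact (h01 k).resolve_left fun h0 => hmin k h0 hk
    · simp only [stepVec, Fin.val_castSucc, Fin.val_fin_lt, hk, if_false]
      have := hz (not_lt.1 hk)
      rcases h01 k with h | h
      · exact h
      · rw [h, hk₀] at this
        norm_num at this
  · push Not at h
    exact ⟨Fin.last ℓ, funext fun k => by simp [stepVec, (h01 k).resolve_left (h k)]⟩

theorem Xset_eq_iUnion_XsetPiece (hb : StrictMono b) :
    Xset ℓ b L = ⋃ j, XsetPiece b L j := by
  ext ⟨v, z, s⟩
  simp only [Set.mem_iUnion]
  constructor
  · intro hx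
    obtain ⟨j, rfl⟩ := exists_eq_stepVec_of_antitone hx.1 (antitone_of_mem_Xset hb hx)
    exact ⟨j, ((mk_stepVec_mem_Xset_iff hb.monotone).1 hx).1, rfl, hx.2.1⟩
  · rintro ⟨j, hv, rfl, hs⟩
    exact (mk_stepVec_mem_Xset_iff hb.monotone).2 ⟨hv, hs⟩

theorem forall_mem_piece_iff (hℓ : 1 ≤ ℓ) (vv : Fin (ℓ + 1) → ℝ) :
    (∀ j, vv j ∈ piece b j) ↔
      vv 0 ≤ b ⟨0, hℓ⟩ ∧
      (∀ j : Fin (ℓ + 1), ∀ h1 : 1 ≤ (j : ℕ), ∀ h2 : (j : ℕ) ≤ ℓ - 1,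
        b ⟨(j : ℕ) - 1, Nat.sub_one_lt_of_le h1 j.is_le⟩ ≤ vv j ∧
          vv j ≤ b ⟨j, Nat.lt_of_le_sub_one hℓ h2⟩) ∧
      b ⟨ℓ - 1, Nat.sub_one_lt_of_le hℓ le_rfl⟩ ≤ vv (Fin.last ℓ) := by
  constructor
  · intro h
    exact ⟨(h 0).2 hℓ, fun j h1 h2 => ⟨(h j).1 (by omega), (h j).2 (by omega)⟩,
      (h (Fin.last ℓ)).1 (by simp; omega)⟩
  · rintro ⟨h0, hmid, hlast⟩ j
    refine ⟨fun hj => ?_, fun hj => ?_⟩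
    · by_cases hjℓ : (j : ℕ) ≤ ℓ - 1
      · exact (hmid j hj hjℓ).1
      · obtain rfl : j = Fin.last ℓ := Fin.ext (by simp; omega)
        simpa using hlast
    · by_cases hj0 : (j : ℕ) = 0
      · obtain rfl : j = 0 := Fin.ext hj0
        exact h0
      · exact (hmid j (by omega) (by omega)).2

theorem mem_convexHull_Xset_iff (hb : StrictMono b) (hL : ConvexOn ℝ Set.univ L)
    (v : ℝ) (z : Fin ℓ → ℝ) (s : ℝ) :
    (v, z, s) ∈ convexHull ℝ (Xset ℓ b L) ↔
      ∃ α vv ss : Fin (ℓ + 1) → ℝ, (∀ j, 0 ≤ α j) ∧ ∑ j, α j = 1 ∧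
        v = ∑ j, α j * vv j ∧ s = ∑ j, α j * ss j ∧
        (∀ k, z k = ∑ j, α j * stepVec ℓ j k) ∧
        (∀ j, vv j ∈ piece b j) ∧ ∀ j, L (vv j) ≤ ss j := by
  rw [Xset_eq_iUnion_XsetPiece hb, convexHull_iUnion_eq (convex_XsetPiece hL)
    (XsetPiece_nonempty hb.monotone), Set.mem_ofPred_eq]
  constructor
  · rintro ⟨α, y, hα0, hα1, hy, hsum⟩
    obtain ⟨hv, hz, hs⟩ := (mk_eq_sum_smul_iff α y v z s).1 hsum.symm
    refine ⟨α, fun j => (y j).1, fun j => (y j).2.2, hα0, hα1, hv, hs, fun k => ?_,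
      fun j => (hy j).1, fun j => (hy j).2.2⟩
    simp only [hz, (hy _).2.1]
  · rintro ⟨α, vv, ss, hα0, hα1, hv, hs, hz, hvv, hss⟩
    exact ⟨α, fun j => (vv j, stepVec ℓ j, ss j), hα0, hα1, fun j => ⟨hvv j, rfl, hss j⟩,
      ((mk_eq_sum_smul_iff _ _ v z s).2 ⟨hv, hz, hs⟩).symm⟩

theorem weights_eq_of_eq_sum_mul_ite (hℓ : 1 ≤ ℓ) (z : Fin ℓ → ℝ)
    (α : Fin (ℓ + 1) → ℝ) (hα : ∑ j, α j = 1)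
    (hz : ∀ k : Fin ℓ,
      z k = ∑ j : Fin (ℓ + 1), α j * (if (k : ℕ) < (j : ℕ) then (1 : ℝ) else 0)) :
    α 0 = 1 - z ⟨0, hℓ⟩ ∧
      (∀ j : Fin (ℓ + 1), ∀ h1 : 1 ≤ (j : ℕ), ∀ h2 : (j : ℕ) ≤ ℓ - 1,
        α j = z ⟨(j : ℕ) - 1, Nat.sub_one_lt_of_le h1 j.is_le⟩ -
          z ⟨j, Nat.lt_of_le_sub_one hℓ h2⟩) ∧
      α (Fin.last ℓ) = z ⟨ℓ - 1, Nat.sub_one_lt_of_le hℓ le_rfl⟩ := by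
  have hpred : ∀ m : ℕ, 1 ≤ m → ∀ i : ℕ, (m - 1 < i ↔ m ≤ i) := fun m hm i => by omega
  refine ⟨?_, fun j h1 h2 => ?_, ?_⟩
  · rw [hz, ← sum_mul_ite_le_sub_sum_mul_ite_lt α 0]
    simp [hα]
  · rw [hz, hz, ← sum_mul_ite_le_sub_sum_mul_ite_lt α j]
    simp only [hpred j h1]
  · have hnone : ∀ i : Fin (ℓ + 1), ¬ ℓ < (i : ℕ) := fun i => not_lt.2 i.is_le
    rw [hz, ← sum_mul_ite_le_sub_sum_mul_ite_lt α (Fin.last ℓ)]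
    simp only [Fin.val_last, hpred ℓ hℓ, hnone, if_false, mul_zero, Finset.sum_const_zero,
      sub_zero]

end Pieces

/-- Membership in `conv(X)` via the disjunctive system: `(v, z, s) ∈ conv(X)` iff there
exist weights `α ∈ ℝ₊^{ℓ+1}` summing to one and points `v⁰, …, vℓ`, `s⁰, …, sℓ` with
`v = Σ αⱼ vʲ`, `s = Σ αⱼ sʲ`, `z = Σ αⱼ 𝟙ⱼ`, `v⁰ ≤ b₁`, `bⱼ ≤ vʲ ≤ b_{j+1}`
(`j ∈ [ℓ−1]`), `vℓ ≥ b_ℓ`, and `ℒ(vʲ) ≤ sʲ`; moreover the weights are determined by `z`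
via `α₀ = 1 − z₁`, `αⱼ = zⱼ − z_{j+1}` (`j ∈ [ℓ−1]`), `α_ℓ = z_ℓ`. -/
theorem stmt16 (ℓ : ℕ) (hℓ : 1 ≤ ℓ) (b : Fin ℓ → ℝ) (hb : StrictMono b)
    (L : ℝ → ℝ) (hL : ConvexOn ℝ Set.univ L)
    (v : ℝ) (z : Fin ℓ → ℝ) (s : ℝ) :
    ((v, z, s) ∈ convexHull ℝ (Xset ℓ b L) ↔
      ∃ α vv ss : Fin (ℓ + 1) → ℝ,
        (∀ j, 0 ≤ α j) ∧ (∑ j, α j) = 1 ∧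
        v = ∑ j, α j * vv j ∧ s = ∑ j, α j * ss j ∧
        (∀ k : Fin ℓ,
          z k = ∑ j : Fin (ℓ + 1), α j * (if (k : ℕ) < (j : ℕ) then (1 : ℝ) else 0)) ∧
        vv 0 ≤ b ⟨0, hℓ⟩ ∧
        (∀ j : Fin (ℓ + 1), ∀ _h1 : 1 ≤ (j : ℕ), ∀ _h2 : (j : ℕ) ≤ ℓ - 1,
          b ⟨(j : ℕ) - 1, by omega⟩ ≤ vv j ∧ vv j ≤ b ⟨(j : ℕ), by omega⟩) ∧
        b ⟨ℓ - 1, by omega⟩ ≤ vv (Fin.last ℓ) ∧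
        (∀ j, L (vv j) ≤ ss j)) ∧
    (∀ α : Fin (ℓ + 1) → ℝ, (∑ j, α j) = 1 →
      (∀ k : Fin ℓ,
        z k = ∑ j : Fin (ℓ + 1), α j * (if (k : ℕ) < (j : ℕ) then (1 : ℝ) else 0)) →
      α 0 = 1 - z ⟨0, hℓ⟩ ∧
      (∀ j : Fin (ℓ + 1), ∀ _h1 : 1 ≤ (j : ℕ), ∀ _h2 : (j : ℕ) ≤ ℓ - 1,
        α j = z ⟨(j : ℕ) - 1, by omega⟩ - z ⟨(j : ℕ), by omega⟩) ∧
      α (Fin.last ℓ) = z ⟨ℓ - 1, by omega⟩) := by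
  refine ⟨?_, weights_eq_of_eq_sum_mul_ite hℓ z⟩
  simpa only [forall_mem_piece_iff hℓ, stepVec, and_assoc] using
    mem_convexHull_Xset_iff hb hL v z s
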